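/- arXiv:2502.04058 — 4 statements merged into one kernel-verified Lean document; each statement's English description precedes it below -/
import Mathlib

section
/- Let X be a nonempty type, x̊ ∈ X a base covariate, and g, f : X → ℝ (the true predictive model and a surrogate model). Suppose that for every cost function c for base point x̊ and for every point x_t ∈ X that is a best response against the surrogate utility (i.e., -f(x_t) - c(x_t) ≥ -f(x) - c(x) for all x ∈ X), the response is non-harmful, i.e., -g(x_t) - c(x_t) ≥ -g(x̊). Then the surrogate cannot overstate the agent's gain on the set of lower-score responses: for every x ∈ X with g(x) < g(x̊), it holds that f(x̊) - f(x) ≤ g(x̊) - g(x). -/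
/-- A cost function for base point `x0`: nonnegative, zero at `x0`, positive elsewhere. -/
def IsCostFn {X : Type*} (x0 : X) (c : X → ℝ) : Prop :=
  (∀ x, 0 ≤ c x) ∧ c x0 = 0 ∧ ∀ x, x ≠ x0 → 0 < c x

/-- Necessary condition: if every best response against the surrogate utility is
non-harmful (for every cost function), then the surrogate does not overstate the gain
on the set of lower-score responses. -/
theorem surrogate_necessary {X : Type*} [Nonempty X] (x0 : X) (g f : X → ℝ)
    (h : ∀ c : X → ℝ, IsCostFn x0 c →
      ∀ xt : X, (∀ x : X, -f x - c x ≤ -f xt - c xt) →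
        -g x0 ≤ -g xt - c xt) :
    ∀ x : X, g x < g x0 → f x0 - f x ≤ g x0 - g x := by
  intro x hx
  by_contra hcon
  push_neg at hcon
  classical
  set t : ℝ := f x0 - f x with ht
  have htg : g x0 - g x < t := hcon
  have htpos : 0 < t := by linarith
  have hxne : x ≠ x0 := by
    intro he; rw [he] at hx; exact lt_irrefl _ hx
  set c : X → ℝ := fun y => if y = x0 then 0 else if y = x then t else max 1 (f x + t - f y)
    with hc
  have hcx0 : c x0 = 0 := by simp [hc]
  have hcx : c x = t := by simp [hc, hxne]
  have hcost : IsCostFn x0 c := by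
    refine ⟨?_, hcx0, ?_⟩
    · intro y
      by_cases h0 : y = x0
      · simp [hc, h0]
      · by_cases h1 : y = x
        · simp [hc, h1, hxne]; linarith
        · simp only [hc, if_neg h0, if_neg h1]
          exact le_trans zero_le_one (le_max_left _ _)
    · intro y hy
      by_cases h1 : y = x
      · simp [hc, h1, hxne]; exact htpos
      · simp only [hc, if_neg hy, if_neg h1]
        exact lt_of_lt_of_le zero_lt_one (le_max_left _ _)
  have hbr : ∀ y : X, -f y - c y ≤ -f x - c x := by
    intro y
    rw [hcx]
    by_cases h0 : y = x0
    · subst h0; rw [hcx0]; linarith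
    · by_cases h1 : y = x
      · subst h1; rw [hcx]
      · simp only [hc, if_neg h0, if_neg h1]
        have : f x + t - f y ≤ max 1 (f x + t - f y) := le_max_right _ _
        linarith
  have hnh := h c hcost x hbr
  rw [hcx] at hnh
  linarith
end

section
/- Let X be a type, x̊ ∈ X, and g, f : X → ℝ. Suppose the necessary condition is violated: there exists x ∈ X with g(x) < g(x̊) and f(x̊) - f(x) > g(x̊) - g(x). Then there exist a cost function c for base point x̊ and a point x_• ∈ X such that x_• is a best response against the surrogate utility, i.e., -f(x_•) - c(x_•) ≥ -f(x) - c(x) for all x ∈ X, and yet x_• is harmful for the agent: -g(x_•) - c(x_•) < -g(x̊). -/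
/-- If the necessary condition is violated, there is a cost function and a best response
against the surrogate utility that is harmful. -/
theorem surrogate_misleads {X : Type*} (x0 : X) (g f : X → ℝ)
    (hviol : ∃ x : X, g x < g x0 ∧ f x0 - f x > g x0 - g x) :
    ∃ (c : X → ℝ) (xb : X), IsCostFn x0 c ∧
      (∀ x : X, -f x - c x ≤ -f xb - c xb) ∧
      -g xb - c xb < -g x0 := by
  classical
  obtain ⟨xs, hg, hf⟩ := hviol
  have hne : xs ≠ x0 := by
    intro h; rw [h] at hg; exact lt_irrefl _ hg
  set ε : ℝ := ((g x0 - g xs) + (f x0 - f xs)) / 2 with hε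
  have h1 : g x0 - g xs < ε := by simp only [hε]; linarith
  have h2 : ε < f x0 - f xs := by simp only [hε]; linarith
  have hεpos : 0 < ε := lt_trans (by linarith) h1
  set c : X → ℝ := fun x => if x = x0 then 0 else if x = xs then ε
    else max (f xs + ε - f x) 1 with hc
  refine ⟨c, xs, ⟨?_, ?_, ?_⟩, ?_, ?_⟩
  · intro x
    by_cases h0 : x = x0
    · simp [hc, h0]
    by_cases hs : x = xs
    · simp [hc, h0, hs, hne]; linarith
    · simp only [hc, if_neg h0, if_neg hs]
      exact le_trans zero_le_one (le_max_right _ _)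
  · simp [hc]
  · intro x hx
    by_cases hs : x = xs
    · simp [hc, hx, hs, hne]; linarith
    · simp only [hc, if_neg hx, if_neg hs]
      exact lt_of_lt_of_le zero_lt_one (le_max_right _ _)
  · intro x
    have hcs : c xs = ε := by simp [hc, hne]
    by_cases h0 : x = x0
    · simp only [h0, hc, if_pos rfl, hcs]; simp [hne]; linarith
    by_cases hs : x = xs
    · rw [hs]
    · have : c x = max (f xs + ε - f x) 1 := by simp [hc, h0, hs]
      rw [this, hcs]
      have := le_max_left (f xs + ε - f x) 1
      linarith
  · have hcs : c xs = ε := by simp [hc, hne]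
    rw [hcs]; linarith
end

section
/- Let X be a type, x̊ ∈ X, and g, f : X → ℝ. Write X^{g↓} = {x ∈ X : g(x) < g(x̊)}. If the necessary condition is violated, i.e., there exists x ∈ X^{g↓} with f(x̊) - f(x) > g(x̊) - g(x), then there exist a point x_• ∈ X^{g↓} and a cost function c for base point x̊ satisfying the following three conditions: (i) 0 < g(x̊) - g(x_•) < c(x_•); (ii) c(x_•) < f(x̊) - f(x_•); and (iii) for every x ∈ X^{g↓} with x ≠ x_•, c(x_•) + (f(x_•) - f(x)) < c(x). -/
lemma IsCostFn.of_pos {X : Type*} {x0 : X} {c : X → ℝ} (h0 : c x0 = 0)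
    (hpos : ∀ x, x ≠ x0 → 0 < c x) : IsCostFn x0 c := by
  refine ⟨fun x => ?_, h0, hpos⟩
  by_cases hx : x = x0
  · exact ((congrArg c hx).trans h0).ge
  · exact (hpos x hx).le

lemma exists_isCostFn_apply_eq_and_lt {X : Type*} {x0 xb : X} (hxb : xb ≠ x0) {m : ℝ}
    (hm : 0 < m) (h : X → ℝ) :
    ∃ c : X → ℝ, IsCostFn x0 c ∧ c xb = m ∧ ∀ x, x ≠ x0 → x ≠ xb → m + h x < c x := by
  classical
  let c : X → ℝ := fun x => if x = x0 then 0 else if x = xb then m else m + |h x| + 1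
  have hpos : ∀ x, x ≠ x0 → 0 < c x := by
    intro x hx
    by_cases hxb' : x = xb
    · subst hxb'
      simpa [c, hxb] using hm
    · simp only [c, hx, hxb', if_false]
      positivity
  refine ⟨c, IsCostFn.of_pos (by simp [c]) hpos, by simp [c, hxb], fun x hx hxb' => ?_⟩
  simp only [c, hx, hxb', if_false]
  linarith [le_abs_self (h x)]

/-- If the necessary condition is violated on the lower-score set `X^{g↓}`, there exist a
point `xb ∈ X^{g↓}` and a cost function satisfying the three conditions of the lemma. -/
theorem violation_lemma {X : Type*} (x0 : X) (g f : X → ℝ)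
    (hviol : ∃ x : X, g x < g x0 ∧ f x0 - f x > g x0 - g x) :
    ∃ (xb : X) (c : X → ℝ), g xb < g x0 ∧ IsCostFn x0 c ∧
      (0 < g x0 - g xb ∧ g x0 - g xb < c xb) ∧
      (c xb < f x0 - f xb) ∧
      (∀ x : X, g x < g x0 → x ≠ xb → c xb + (f xb - f x) < c x) := by
  obtain ⟨xb, hgxb, hviol⟩ := hviol
  have ne_x0 : ∀ {x}, g x < g x0 → x ≠ x0 := fun hgx h => (h ▸ hgx).false
  obtain ⟨c, hc, hcxb, hlt⟩ := exists_isCostFn_apply_eq_and_lt (ne_x0 hgxb)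
    (m := ((g x0 - g xb) + (f x0 - f xb)) / 2) (by linarith) (fun x => f xb - f x)
  refine ⟨xb, c, hgxb, hc, ⟨by linarith, by linarith⟩, by linarith, fun x hgx hx => ?_⟩
  rw [hcxb]
  exact hlt x (ne_x0 hgx) hx
end

section
/- Let X be a nonempty type and x̊ ∈ X. Let (Θ, 𝒜, μ) be a probability space (the agent's posterior belief over model parameters), let G : Θ → X → ℝ be a parametrized family of predictive models such that θ ↦ G(θ)(x) is integrable with respect to μ for every x ∈ X, let θ₀ ∈ Θ be the true parameter, and set g = G(θ₀) (the true predictive model) and f(x) = ∫ G(θ)(x) dμ(θ) (the agent's posterior-mean belief about the model). Suppose that for every cost function c for base point x̊ and every x_t ∈ X that is a best response against the surrogate utility -f(·) - c(·) (i.e., -f(x_t) - c(x_t) ≥ -f(x) - c(x) for all x ∈ X), the response is non-harmful: -g(x_t) - c(x_t) ≥ -g(x̊). Then f(x̊) - f(x) ≤ g(x̊) - g(x) for every x ∈ X with g(x) < g(x̊). -/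
open MeasureTheory

/-- Bayesian extension of the necessary condition: an agent acting on the posterior-mean
surrogate `f x = ∫ θ, G θ x ∂μ` of the true model `g = G θ0` must satisfy the
no-overstatement condition if all their best responses are guaranteed non-harmful. -/
theorem bayesian_surrogate_necessary {X : Type*} [Nonempty X] (x0 : X)
    {Θ : Type*} [MeasurableSpace Θ] (μ : Measure Θ) [IsProbabilityMeasure μ]
    (G : Θ → X → ℝ) (hG : ∀ x : X, Integrable (fun θ => G θ x) μ)
    (θ0 : Θ) (g f : X → ℝ) (hg : ∀ x : X, g x = G θ0 x)
    (hf : ∀ x : X, f x = ∫ θ, G θ x ∂μ)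
    (h : ∀ c : X → ℝ, IsCostFn x0 c →
      ∀ xt : X, (∀ x : X, -f x - c x ≤ -f xt - c xt) →
        -g x0 ≤ -g xt - c xt) :
    ∀ x : X, g x < g x0 → f x0 - f x ≤ g x0 - g x := by
  classical
  intro x hx
  by_contra hlt
  push_neg at hlt
  set d : ℝ := g x0 - g x with hd
  have hd0 : 0 < d := by simp [hd]; linarith
  set t : ℝ := (d + (f x0 - f x)) / 2 with ht
  have ht1 : d < t := by simp [ht]; linarith
  have ht2 : t < f x0 - f x := by simp [ht]; linarith
  have hxne : x ≠ x0 := by intro e; rw [e] at hx; exact lt_irrefl _ hx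
  set c : X → ℝ := fun y => if y = x0 then 0 else if y = x then t else |f x0 - f y| + 1
    with hc
  have hcost : IsCostFn x0 c := by
    refine ⟨?_, ?_, ?_⟩
    · intro y
      by_cases h1 : y = x0 <;> by_cases h2 : y = x <;>
        simp [hc, h1, h2, hxne] <;>
        first
          | linarith
          | positivity
    · simp [hc]
    · intro y hy
      by_cases h2 : y = x <;> simp [hc, hy, h2, hxne] <;>
        first
          | linarith
          | positivity
  have hbr : ∀ y : X, -f y - c y ≤ -f x - c x := by
    intro y
    by_cases h1 : y = x0
    · simp [hc, h1, hxne]; linarith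
    · by_cases h2 : y = x
      · simp [h2]
      · simp [hc, h1, h2, hxne]
        have := abs_nonneg (f x0 - f y)
        have := le_abs_self (f x0 - f y)
        linarith
  have := h c hcost x hbr
  have hcx : c x = t := by simp [hc, hxne]
  rw [hcx] at this
  linarith
end
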